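/- Let q : Γ → ℝ be a map satisfying |q(ab) − q(a) − q(b)| ≤ D for all a,b ∈ Γ, and suppose q is homogeneous: q(γⁿ) = n·q(γ) for all n ≥ 1. If γ = [a₁,b₁]⋯[a_g,b_g] is a product of g commutators, then |q(γ)| ≤ (2g−1)·D... in particular |q(γ)| ≤ 2g·D. -/

import Mathlib

/-!
A homogeneous quasimorphism is constant on conjugacy classes and odd: in both cases the two
sides differ by a bounded amount on `n`-th powers, hence by `1/n` of that bound for every `n`.
Writing `⁅a, b⁆ = (a b a⁻¹) b⁻¹`, the quasimorphism inequality for this product therefore reads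
`|q ⁅a, b⁆| ≤ D`. Splitting a product of `g` elements costs `D` at each of the `g - 1` splits,
which gives `g D + (g - 1) D = (2g - 1) D` for a product of `g` commutators.
-/

open scoped commutatorElement

theorem eq_of_forall_natCast_mul_abs_sub_le {a b C : ℝ}
    (h : ∀ n : ℕ, 1 ≤ n → n * |a - b| ≤ C) : a = b := by
  by_contra hab
  have hpos : 0 < |a - b| := abs_pos.mpr (sub_ne_zero.mpr hab)
  obtain ⟨n, hn⟩ := exists_nat_gt (C / |a - b|)
  have hle := h (n + 1) (Nat.le_add_left 1 n)
  have hlt : C < (n + 1 : ℕ) * |a - b| := by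
    rw [← div_lt_iff₀ hpos]
    push_cast
    linarith
  linarith

section Quasimorphism

variable {G : Type*} [Group G]

def IsQuasimorphism (q : G → ℝ) (D : ℝ) : Prop :=
  ∀ a b : G, |q (a * b) - q a - q b| ≤ D

def IsPowHomogeneous (q : G → ℝ) : Prop :=
  ∀ x : G, ∀ n : ℕ, 1 ≤ n → q (x ^ n) = n * q x

variable {q : G → ℝ} {D : ℝ}

theorem IsQuasimorphism.defect_nonneg (hq : IsQuasimorphism q D) : 0 ≤ D :=
  (abs_nonneg _).trans (hq 1 1)

theorem IsQuasimorphism.abs_map_cons_prod_le (hq : IsQuasimorphism q D) {B : ℝ}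
    (l : List G) (hB : ∀ c ∈ l, |q c| ≤ B) (c : G) (hc : |q c| ≤ B) :
    |q (c :: l).prod| ≤ (l.length + 1) * B + l.length * D := by
  induction l generalizing c with
  | nil => simpa using hc
  | cons d t ih =>
    have ht : |q (d :: t).prod| ≤ (t.length + 1) * B + t.length * D :=
      ih (fun x hx => hB x (List.mem_cons_of_mem d hx)) d (hB d List.mem_cons_self)
    have hsplit := abs_le.mp (hq c (d :: t).prod)
    rw [List.prod_cons, List.length_cons]
    push_cast
    rw [abs_le] at ht hc ⊢
    constructor <;> linarith

namespace IsPowHomogeneous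

theorem map_one (hhom : IsPowHomogeneous q) : q 1 = 0 := by
  have h := hhom 1 2 one_le_two
  rw [one_pow] at h
  push_cast at h
  linarith

theorem eq_of_forall_abs_map_pow_sub_le (hhom : IsPowHomogeneous q) {x : G} {c C : ℝ}
    (h : ∀ n : ℕ, 1 ≤ n → |q (x ^ n) - n * c| ≤ C) : q x = c := by
  refine eq_of_forall_natCast_mul_abs_sub_le (C := C) fun n hn => ?_
  calc (n : ℝ) * |q x - c| = |q (x ^ n) - n * c| := by
        rw [hhom x n hn, ← mul_sub, abs_mul, Nat.abs_cast]
    _ ≤ C := h n hn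

theorem map_inv (hhom : IsPowHomogeneous q) (hq : IsQuasimorphism q D) (x : G) :
    q x⁻¹ = -q x := by
  refine hhom.eq_of_forall_abs_map_pow_sub_le (C := D) fun n hn => ?_
  have h := hq (x⁻¹ ^ n) (x ^ n)
  rw [inv_pow, inv_mul_cancel, hhom.map_one, hhom x n hn, ← inv_pow] at h
  calc |q (x⁻¹ ^ n) - n * -q x| = |0 - q (x⁻¹ ^ n) - n * q x| := by
        rw [← abs_neg]; ring_nf
    _ ≤ D := h

theorem map_conj (hhom : IsPowHomogeneous q) (hq : IsQuasimorphism q D) (h x : G) :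
    q (h * x * h⁻¹) = q x := by
  refine hhom.eq_of_forall_abs_map_pow_sub_le (C := 2 * D) fun n hn => ?_
  have hleft := abs_le.mp (hq h (x ^ n * h⁻¹))
  have hright := abs_le.mp (hq (x ^ n) h⁻¹)
  rw [← mul_assoc] at hleft
  rw [hhom.map_inv hq] at hright
  rw [conj_pow, ← hhom x n hn, abs_le]
  constructor <;> linarith

theorem abs_map_commutatorElement_le (hhom : IsPowHomogeneous q) (hq : IsQuasimorphism q D)
    (a b : G) : |q ⁅a, b⁆| ≤ D := by
  have h := hq (a * b * a⁻¹) b⁻¹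
  rw [← commutatorElement_def, hhom.map_conj hq, hhom.map_inv hq] at h
  simpa using h

end IsPowHomogeneous

end Quasimorphism

theorem stmt17 {Γ : Type*} [Group Γ] (q : Γ → ℝ) (D : ℝ)
    (hq : ∀ a b : Γ, |q (a * b) - q a - q b| ≤ D)
    (hhom : ∀ γ : Γ, ∀ n : ℕ, 1 ≤ n → q (γ ^ n) = n * q γ)
    (γ : Γ) (g : ℕ) (hg : 0 < g)
    (a b : Fin g → Γ) (hγ : γ = (List.ofFn fun i => ⁅a i, b i⁆).prod) :
    |q γ| ≤ (2 * (g : ℝ) - 1) * D ∧ |q γ| ≤ 2 * (g : ℝ) * D := by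
  have hcomm (x y : Γ) : |q ⁅x, y⁆| ≤ D :=
    IsPowHomogeneous.abs_map_commutatorElement_le hhom hq x y
  obtain ⟨k, rfl⟩ := Nat.exists_eq_add_one.mpr hg
  rw [List.ofFn_succ] at hγ
  have hbound := IsQuasimorphism.abs_map_cons_prod_le hq _
    (List.forall_mem_ofFn_iff.mpr fun i => hcomm (a i.succ) (b i.succ)) _ (hcomm (a 0) (b 0))
  rw [← hγ, List.length_ofFn] at hbound
  have hD := IsQuasimorphism.defect_nonneg hq
  push_cast
  constructor <;> linarith
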